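/- Let x₀, v_max, a > 0 and t₀ < t_f1 ≤ t_f, with Δ := t_f − t₀ and S := t_f − t_f1. Assume x₀/v_max ≤ Δ < x₀/v_max + v_max/a. Set u := v_max − √(a(v_max·Δ − x₀)), t_acc := t_f1 − (v_max − u)/a, t_dec := t_acc − (v_max − u)/a, and assume t_dec ≥ t₀. Define the piecewise trajectory x* on [t₀, t_f] by: x*(s) = −x₀ + v_max(s − t₀) for s ∈ [t₀, t_dec]; x*(s) = −x₀ + v_max(s − t₀) − (a/2)(s − t_dec)² for s ∈ [t_dec, t_acc]; x*(s) = −x₀ + v_max(t_acc − t₀) − (v_max − u)²/(2a) + u(s − t_acc) + (a/2)(s − t_acc)² for s ∈ [t_acc, t_f1]; x*(s) = −v_max·S + v_max(s − t_f1) for s ∈ [t_f1, t_f]. Then every x ∈ Π(t₀, t_f, x₀, v_max, a) satisfying x(t_f1) ≤ −v_max·S also satisfies x(s) ≤ x*(s) for all s ∈ [t₀, t_f]. -/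

import Mathlib

/-- The class `Π(t₀, t_f, x₀, v_max, a)` of compatible trajectories: continuously
differentiable on `[t₀, t_f]`, derivative Lipschitz with constant `a` (acceleration
bounded by `a`), speed in `[0, v_max]`, entering the control region of length `x₀` at
speed `v_max` and reaching the intersection (position `0`) at speed `v_max`. -/
def CompatTraj (t₀ tf x₀ vmax a : ℝ) : Set (ℝ → ℝ) :=
  {x | ContDiffOn ℝ 1 x (Set.Icc t₀ tf) ∧
    LipschitzOnWith (Real.toNNReal a) (deriv x) (Set.Icc t₀ tf) ∧
    (∀ s ∈ Set.Icc t₀ tf, 0 ≤ deriv x s ∧ deriv x s ≤ vmax) ∧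
    x t₀ = -x₀ ∧ deriv x t₀ = vmax ∧ x tf = 0 ∧ deriv x tf = vmax}

/-- The closed-form trajectory without a full stop: drive at `v_max`, decelerate at `−a`
to the minimum speed `u = v_max − √(a(v_max·Δ − x₀))`, immediately accelerate at `a`
back to `v_max` at the platoon head's crossing time `t_f1`, then drive at `v_max`. -/
noncomputable def xStarNoStop (x₀ vmax a t₀ tf1 tf : ℝ) (s : ℝ) : ℝ :=
  let Δ := tf - t₀
  let S := tf - tf1
  let u := vmax - Real.sqrt (a * (vmax * Δ - x₀))
  let tacc := tf1 - (vmax - u) / a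
  let tdec := tacc - (vmax - u) / a
  if s ≤ tdec then -x₀ + vmax * (s - t₀)
  else if s ≤ tacc then -x₀ + vmax * (s - t₀) - a / 2 * (s - tdec) ^ 2
  else if s ≤ tf1 then
    -x₀ + vmax * (tacc - t₀) - (vmax - u) ^ 2 / (2 * a)
      + u * (s - tacc) + a / 2 * (s - tacc) ^ 2
  else -vmax * S + vmax * (s - tf1)

/-!
An admissible trajectory is constrained in three ways. Its speed is at most `v_max`, so it stays
below the cruising line through `(t₀, -x₀)`. It cannot gain on the cruising line over
`[t_f1, t_f]` either, so the safety constraint forces `x(t_f1) = -v_max S`, and then the speed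
at `t_f1` is exactly `v_max`. Its speed changes at rate at most `a`, which gives Taylor bounds
with remainder `a h² / 2` around every time. Before `t_dec` the first constraint yields `x*`,
after `t_f1` it does together with the safety constraint, and on `[t_acc, t_f1]` the Taylor
bound anchored at `t_f1` does. On `[t_dec, t_acc]` compare the speed `w` at `s` with that of
`x*`: if `w` is smaller, braking from `t_dec` to `s` bounds `x(s)` from the past; if larger,
the vehicle must keep braking until `t_acc` and accelerate back to `v_max` by `t_f1`, which
bounds `x(s)` from the future.
-/

open Set NNReal

theorem sub_le_sub_of_deriv_le {f g : ℝ → ℝ} {α β : ℝ} (hαβ : α ≤ β)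
    (hf : ContinuousOn f (Icc α β)) (hf' : DifferentiableOn ℝ f (Ioo α β))
    (hg : ContinuousOn g (Icc α β)) (hg' : DifferentiableOn ℝ g (Ioo α β))
    (h : ∀ t ∈ Ioo α β, deriv f t ≤ deriv g t) : f β - f α ≤ g β - g α := by
  have hmono : MonotoneOn (fun t => g t - f t) (Icc α β) := by
    refine monotoneOn_of_deriv_nonneg (convex_Icc α β) (hg.sub hf) ?_ fun t ht => ?_
    · rw [interior_Icc]; exact hg'.fun_sub hf'
    · rw [interior_Icc] at ht
      rw [deriv_fun_sub (hg'.differentiableAt (Ioo_mem_nhds ht.1 ht.2))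
        (hf'.differentiableAt (Ioo_mem_nhds ht.1 ht.2))]
      exact sub_nonneg.2 (h t ht)
  have := hmono (left_mem_Icc.2 hαβ) (right_mem_Icc.2 hαβ) hαβ
  simp only at this
  linarith

theorem hasDerivAt_quadratic (v c α t : ℝ) :
    HasDerivAt (fun t => v * (t - α) + c / 2 * (t - α) ^ 2) (v + c * (t - α)) t := by
  have hlin := (hasDerivAt_id' t).sub_const α
  exact ((hlin.const_mul v).fun_add ((hlin.fun_pow 2).const_mul (c / 2))).congr_deriv
    (by push_cast; ring)

theorem sub_le_of_deriv_le_affine {f : ℝ → ℝ} {α β v c : ℝ} (hαβ : α ≤ β)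
    (hf : ContinuousOn f (Icc α β)) (hf' : DifferentiableOn ℝ f (Ioo α β))
    (h : ∀ t ∈ Ioo α β, deriv f t ≤ v + c * (t - α)) :
    f β - f α ≤ v * (β - α) + c / 2 * (β - α) ^ 2 := by
  have hq := hasDerivAt_quadratic v c α
  have := sub_le_sub_of_deriv_le hαβ hf hf' (by fun_prop) (by fun_prop)
    fun t ht => (hq t).deriv ▸ h t ht
  simpa using this

theorem le_sub_of_affine_le_deriv {f : ℝ → ℝ} {α β v c : ℝ} (hαβ : α ≤ β)
    (hf : ContinuousOn f (Icc α β)) (hf' : DifferentiableOn ℝ f (Ioo α β))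
    (h : ∀ t ∈ Ioo α β, v + c * (t - α) ≤ deriv f t) :
    v * (β - α) + c / 2 * (β - α) ^ 2 ≤ f β - f α := by
  have hq := hasDerivAt_quadratic v c α
  have := sub_le_sub_of_deriv_le hαβ (by fun_prop) (by fun_prop) hf hf'
    fun t ht => (hq t).deriv ▸ h t ht
  simpa using this

theorem LipschitzOnWith.abs_sub_le {f : ℝ → ℝ} {s : Set ℝ} {K : ℝ≥0}
    (hf : LipschitzOnWith K f s) {σ τ : ℝ} (hσ : σ ∈ s) (hτ : τ ∈ s) :
    |f σ - f τ| ≤ K * |σ - τ| := by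
  simpa only [Real.dist_eq] using hf.dist_le_mul σ hσ τ hτ

section LipschitzDeriv

variable {x : ℝ → ℝ} {t₀ tf α β : ℝ} {K : ℝ≥0}

theorem sub_le_deriv_right_mul_add (hc : ContinuousOn x (Icc t₀ tf))
    (hd : DifferentiableOn ℝ x (Ioo t₀ tf)) (hL : LipschitzOnWith K (deriv x) (Icc t₀ tf))
    (hα : t₀ ≤ α) (hαβ : α ≤ β) (hβ : β ≤ tf) :
    x β - x α ≤ deriv x β * (β - α) + K / 2 * (β - α) ^ 2 := by
  have := sub_le_of_deriv_le_affine (v := deriv x β + K * (β - α)) (c := -K) hαβ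
    (hc.mono (Icc_subset_Icc hα hβ)) (hd.mono (Ioo_subset_Ioo hα hβ)) fun t ht => by
      have h := hL.abs_sub_le (Ioo_subset_Icc_self (Ioo_subset_Ioo hα hβ ht))
        (⟨hα.trans hαβ, hβ⟩ : β ∈ Icc t₀ tf)
      rw [abs_of_neg (sub_neg.2 ht.2)] at h
      linarith [(abs_le.1 h).2]
  linarith

theorem deriv_left_mul_sub_le_sub (hc : ContinuousOn x (Icc t₀ tf))
    (hd : DifferentiableOn ℝ x (Ioo t₀ tf)) (hL : LipschitzOnWith K (deriv x) (Icc t₀ tf))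
    (hα : t₀ ≤ α) (hαβ : α ≤ β) (hβ : β ≤ tf) :
    deriv x α * (β - α) - K / 2 * (β - α) ^ 2 ≤ x β - x α := by
  have := le_sub_of_affine_le_deriv (v := deriv x α) (c := -K) hαβ
    (hc.mono (Icc_subset_Icc hα hβ)) (hd.mono (Ioo_subset_Ioo hα hβ)) fun t ht => by
      have h := hL.abs_sub_le (Ioo_subset_Icc_self (Ioo_subset_Ioo hα hβ ht))
        (⟨hα, hαβ.trans hβ⟩ : α ∈ Icc t₀ tf)
      rw [abs_of_pos (sub_pos.2 ht.1)] at h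
      linarith [(abs_le.1 h).1]
  linarith

theorem deriv_right_mul_sub_le_sub (hc : ContinuousOn x (Icc t₀ tf))
    (hd : DifferentiableOn ℝ x (Ioo t₀ tf)) (hL : LipschitzOnWith K (deriv x) (Icc t₀ tf))
    (hα : t₀ ≤ α) (hαβ : α ≤ β) (hβ : β ≤ tf) :
    deriv x β * (β - α) - K / 2 * (β - α) ^ 2 ≤ x β - x α := by
  have := le_sub_of_affine_le_deriv (v := deriv x β - K * (β - α)) (c := K) hαβ
    (hc.mono (Icc_subset_Icc hα hβ)) (hd.mono (Ioo_subset_Ioo hα hβ)) fun t ht => by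
      have h := hL.abs_sub_le (Ioo_subset_Icc_self (Ioo_subset_Ioo hα hβ ht))
        (⟨hα.trans hαβ, hβ⟩ : β ∈ Icc t₀ tf)
      rw [abs_of_neg (sub_neg.2 ht.2)] at h
      linarith [(abs_le.1 h).1]
  linarith

end LipschitzDeriv

theorem deriv_eq_of_sub_eq_of_deriv_le {f : ℝ → ℝ} {α β v : ℝ} (hαβ : α < β)
    (hf : ContinuousOn f (Icc α β)) (hf' : DifferentiableOn ℝ f (Ioo α β))
    (hfα : DifferentiableAt ℝ f α) (hle : ∀ t ∈ Ioo α β, deriv f t ≤ v)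
    (heq : f β - f α = v * (β - α)) : deriv f α = v := by
  have hmove := (convex_Icc α β).image_sub_le_mul_sub_of_deriv_le hf (by rwa [interior_Icc])
    (by simpa only [interior_Icc] using hle)
  have hα : α ∈ Icc α β := left_mem_Icc.2 hαβ.le
  have hβ : β ∈ Icc α β := right_mem_Icc.2 hαβ.le
  have hline : ∀ t ∈ Icc α β, f t = f α + v * (t - α) := fun t ht => by
    linarith [hmove α hα t ht ht.1, hmove t ht β hβ ht.2]
  have hderiv : HasDerivWithinAt f v (Icc α β) α :=
    (((hasDerivAt_id' α).sub_const α).const_mul v |>.const_add (f α)).hasDerivWithinAt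
      |>.congr_of_mem hline hα |>.congr_deriv (mul_one v)
  exact (uniqueDiffOn_Icc hαβ α hα).eq_deriv _ hfα.hasDerivAt.hasDerivWithinAt hderiv

theorem deriv_eq_of_cruising_after {x : ℝ → ℝ} {t₀ t₁ tf v : ℝ} (ht₀ : t₀ < t₁)
    (ht₁ : t₁ ≤ tf) (hc : ContinuousOn x (Icc t₀ tf)) (hd : DifferentiableOn ℝ x (Ioo t₀ tf))
    (hv : ∀ t ∈ Ioo t₀ tf, deriv x t ≤ v) (hdf : deriv x tf = v)
    (heq : x tf - x t₁ = v * (tf - t₁)) : deriv x t₁ = v := by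
  rcases ht₁.eq_or_lt with rfl | hlt
  · exact hdf
  · exact deriv_eq_of_sub_eq_of_deriv_le hlt (hc.mono (Icc_subset_Icc_left ht₀.le))
      (hd.mono (Ioo_subset_Ioo_left ht₀.le)) (hd.differentiableAt (Ioo_mem_nhds ht₀ hlt))
      (fun t ht => hv t ⟨ht₀.trans ht.1, ht.2⟩) heq

theorem le_sub_sq_of_deriv_le {x : ℝ → ℝ} {t₀ tf t₁ ρ s v : ℝ} {K : ℝ≥0}
    (hc : ContinuousOn x (Icc t₀ tf)) (hd : DifferentiableOn ℝ x (Ioo t₀ tf))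
    (hL : LipschitzOnWith K (deriv x) (Icc t₀ tf)) (hv : ∀ t ∈ Ioo t₀ tf, deriv x t ≤ v)
    (hdec : t₀ ≤ t₁ - 2 * ρ) (hs₁ : t₁ - 2 * ρ ≤ s) (hs₂ : s ≤ t₁ - ρ) (ht₁ : t₁ ≤ tf)
    (hdv : deriv x t₁ = v) (hend : x t₁ ≤ x t₀ + v * (t₁ - t₀) - K * ρ ^ 2) :
    x s ≤ x t₀ + v * (s - t₀) - K / 2 * (s - (t₁ - 2 * ρ)) ^ 2 := by
  have hcruise := (convex_Icc t₀ tf).image_sub_le_mul_sub_of_deriv_le hc (by rwa [interior_Icc])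
    (by simpa only [interior_Icc] using hv) t₀ ⟨le_rfl, by linarith⟩ (t₁ - 2 * ρ)
    ⟨hdec, by linarith⟩ hdec
  have hbrake := sub_le_deriv_right_mul_add hc hd hL hdec hs₁ (by linarith)
  have hbrake' := deriv_left_mul_sub_le_sub hc hd hL (hdec.trans hs₁) hs₂ (by linarith)
  have hboost := deriv_right_mul_sub_le_sub (α := t₁ - ρ) hc hd hL (by linarith) (by linarith) ht₁
  rw [hdv] at hboost
  rcases le_total (deriv x s) (v - K * (s - (t₁ - 2 * ρ))) with hslow | hfast
  · nlinarith [mul_le_mul_of_nonneg_left hslow (sub_nonneg.2 hs₁)]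
  · nlinarith [mul_le_mul_of_nonneg_left hfast (sub_nonneg.2 hs₂)]

theorem exists_sqrt_mul_eq_mul {a X : ℝ} (ha : 0 < a) (hX : 0 ≤ X) :
    ∃ ρ, √(a * X) = a * ρ ∧ a * ρ ^ 2 = X := by
  refine ⟨√(a * X) / a, by field_simp, ?_⟩
  have := Real.sq_sqrt (mul_nonneg ha.le hX)
  field_simp
  linarith

theorem xStarNoStop_eq {x₀ vmax a t₀ tf1 tf ρ : ℝ} (ha : a ≠ 0)
    (hr : √(a * (vmax * (tf - t₀) - x₀)) = a * ρ) (hρ : a * ρ ^ 2 = vmax * (tf - t₀) - x₀)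
    (s : ℝ) :
    xStarNoStop x₀ vmax a t₀ tf1 tf s =
      if s ≤ tf1 - 2 * ρ then -x₀ + vmax * (s - t₀)
      else if s ≤ tf1 - ρ then -x₀ + vmax * (s - t₀) - a / 2 * (s - (tf1 - 2 * ρ)) ^ 2
      else if s ≤ tf1 then -vmax * (tf - s) + a / 2 * (tf1 - s) ^ 2
      else -vmax * (tf - s) := by
  have hstep : (vmax - (vmax - a * ρ)) / a = ρ := by field_simp; ring
  simp only [xStarNoStop, hr, hstep, show tf1 - ρ - ρ = tf1 - 2 * ρ by ring]
  split_ifs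
  · rfl
  · rfl
  · field_simp
    linear_combination (-2 * a) * hρ
  · ring

theorem xStarNoStop_pointwise_optimal_general
    (x₀ vmax a t₀ tf1 tf : ℝ)
    (ha : 0 < a)
    (ht₀ : t₀ < tf1) (htf : tf1 ≤ tf)
    (hdec : tf1 - 2 * (vmax - (vmax - Real.sqrt (a * (vmax * (tf - t₀) - x₀)))) / a ≥ t₀) :
    ∀ x ∈ CompatTraj t₀ tf x₀ vmax a,
      x tf1 ≤ -vmax * (tf - tf1) →
      ∀ s ∈ Set.Icc t₀ tf, x s ≤ xStarNoStop x₀ vmax a t₀ tf1 tf s := by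
  rintro x ⟨hC, hL, hspeed, hx₀, -, hxf, hdf⟩ hsafe s hs
  have hc : ContinuousOn x (Icc t₀ tf) := hC.continuousOn
  have hd : DifferentiableOn ℝ x (Ioo t₀ tf) :=
    (hC.differentiableOn one_ne_zero).mono Ioo_subset_Icc_self
  have hv : ∀ t ∈ Ioo t₀ tf, deriv x t ≤ vmax := fun t ht => (hspeed t (Ioo_subset_Icc_self ht)).2
  have hcruise := (convex_Icc t₀ tf).image_sub_le_mul_sub_of_deriv_le hc (by rwa [interior_Icc])
    (by simpa only [interior_Icc] using hv)
  have htf1 : tf1 ∈ Icc t₀ tf := ⟨ht₀.le, htf⟩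
  have htf' : tf ∈ Icc t₀ tf := ⟨htf1.1.trans htf, le_rfl⟩
  have hxtf1 : x tf1 = -vmax * (tf - tf1) :=
    le_antisymm hsafe (by linarith [hcruise tf1 htf1 tf htf' htf])
  have hdtf1 : deriv x tf1 = vmax :=
    deriv_eq_of_cruising_after ht₀ htf hc hd hv hdf (by linarith)
  obtain ⟨ρ, hr, hρ⟩ := exists_sqrt_mul_eq_mul (X := vmax * (tf - t₀) - x₀) ha
    (by linarith [hcruise t₀ ⟨le_rfl, htf'.1⟩ tf htf' htf'.1])
  have hdec' : t₀ ≤ tf1 - 2 * ρ := by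
    rw [hr, show 2 * (vmax - (vmax - a * ρ)) / a = 2 * ρ by field_simp; ring] at hdec
    exact hdec
  have hK : ((a.toNNReal : ℝ≥0) : ℝ) = a := Real.coe_toNNReal a ha.le
  rw [xStarNoStop_eq ha.ne' hr hρ]
  split_ifs with h₁ h₂ h₃
  · linarith [hcruise t₀ ⟨le_rfl, htf'.1⟩ s hs hs.1]
  · have := le_sub_sq_of_deriv_le hc hd hL hv hdec' (not_le.1 h₁).le h₂ htf hdtf1
      (by rw [hK]; linarith)
    rw [hK] at this
    linarith
  · have := deriv_right_mul_sub_le_sub hc hd hL hs.1 h₃ htf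
    rw [hK, hdtf1] at this
    linarith
  · linarith [hcruise tf1 htf1 s hs (not_le.1 h₃).le]

/-- Optimality part 1 (non-stopping case): the closed-form non-stopping trajectory
pointwise dominates every compatible trajectory satisfying the safety constraint
`x(t_f1) ≤ −v_max·S` at the crossing time of the head of the platoon. -/
theorem xStarNoStop_pointwise_optimal
    (x₀ vmax a t₀ tf1 tf : ℝ)
    (hx₀ : 0 < x₀) (hv : 0 < vmax) (ha : 0 < a)
    (ht₀ : t₀ < tf1) (htf : tf1 ≤ tf)
    (hΔ₁ : x₀ / vmax ≤ tf - t₀)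
    (hΔ₂ : tf - t₀ < x₀ / vmax + vmax / a)
    (hdec : tf1 - 2 * (vmax - (vmax - Real.sqrt (a * (vmax * (tf - t₀) - x₀)))) / a ≥ t₀) :
    ∀ x ∈ CompatTraj t₀ tf x₀ vmax a,
      x tf1 ≤ -vmax * (tf - tf1) →
      ∀ s ∈ Set.Icc t₀ tf, x s ≤ xStarNoStop x₀ vmax a t₀ tf1 tf s :=
  xStarNoStop_pointwise_optimal_general x₀ vmax a t₀ tf1 tf ha ht₀ htf hdec
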